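/- Let t ↦ v(t) be a continuous family of real n × n matrices and t ↦ J(t) a C¹ family of real n × n matrices solving the ODE 2·J'(t) = J(t)·v(t) - v(t)·J(t), with initial condition J(0)² = -I. Then J(t)² = -I for all t. -/

import Mathlib

/-!
`K := J² + 1` solves the linear ODE `2K' = Kv - vK` with `K(0) = 0`: differentiating,
`2(J'J + JJ') = (Jv - vJ)J + J(Jv - vJ) = J²v - vJ²`. A linear ODE with continuous
coefficients has only the zero solution through zero (Grönwall), so `K ≡ 0`.
-/

open Set

attribute [local instance] Matrix.linftyOpNormedAddCommGroup Matrix.linftyOpNormedSpace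
  Matrix.linftyOpNormedRing Matrix.linftyOpNormedAlgebra

theorem eq_zero_of_hasDerivAt_eq_apply_of_eq_zero {E : Type*} [NormedAddCommGroup E]
    [NormedSpace ℝ E] {L : ℝ → E →L[ℝ] E} (hL : Continuous L) {f : ℝ → E}
    (hf : ∀ t, HasDerivAt f (L t (f t)) t) {t₀ : ℝ} (h₀ : f t₀ = 0) : f = 0 := by
  ext t
  obtain ⟨a, b, ht, ht₀⟩ : ∃ a b, t ∈ Ioo a b ∧ t₀ ∈ Ioo a b :=
    ⟨min t t₀ - 1, max t t₀ + 1, by constructor <;> constructor <;> grind⟩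
  obtain ⟨C, hC⟩ := ((isCompact_Icc (a := a) (b := b)).image (continuous_nnnorm.comp hL)).bddAbove
  have hLip : ∀ s ∈ Ioo a b, LipschitzOnWith C (L s) univ := fun s hs =>
    ((L s).lipschitz.weaken (hC ⟨s, Ioo_subset_Icc_self hs, rfl⟩)).lipschitzOnWith
  refine ODE_solution_unique_of_mem_Ioo hLip ht₀ (fun s _ => ⟨hf s, mem_univ _⟩)
    (fun s _ => ⟨?_, mem_univ _⟩) h₀ ht
  rw [Pi.zero_apply, map_zero]
  exact hasDerivAt_const s 0

theorem two_smul_mul_add_mul_eq_of_two_smul_eq {A : Type*} [Ring A] [Module ℝ A]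
    [IsScalarTower ℝ A A] [SMulCommClass ℝ A A] {J D v : A}
    (hD : (2 : ℝ) • D = J * v - v * J) :
    (2 : ℝ) • (D * J + J * D) = (J * J + 1) * v - v * (J * J + 1) := by
  rw [smul_add, ← smul_mul_assoc, ← mul_smul_comm, hD]
  noncomm_ring

/-- If a `C¹` family of matrices `J` solves the ODE `2J' = Jv - vJ` and
`J(0)² = -1`, then `J(t)² = -1` for all `t`. -/
theorem square_minus_one_preserved
    (n : ℕ) (v J D : ℝ → Matrix (Fin n) (Fin n) ℝ)
    (hv : ∀ i j, Continuous fun t => v t i j)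
    (hJ : ∀ i j, ∀ t : ℝ, HasDerivAt (fun s => J s i j) (D t i j) t)
    (hD : ∀ t : ℝ, (2 : ℝ) • D t = J t * v t - v t * J t)
    (h0 : J 0 * J 0 = -1) :
    ∀ t : ℝ, J t * J t = -1 := by
  let mul := ContinuousLinearMap.mul ℝ (Matrix (Fin n) (Fin n) ℝ)
  let L : ℝ → Matrix (Fin n) (Fin n) ℝ →L[ℝ] Matrix (Fin n) (Fin n) ℝ :=
    fun t => (2⁻¹ : ℝ) • (mul.flip (v t) - mul (v t))
  have hvc : Continuous v := continuous_pi fun i => continuous_pi fun j => hv i j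
  have hK : ∀ t, HasDerivAt (fun s => J s * J s + 1) (L t (J t * J t + 1)) t := by
    intro t
    have hJt : HasDerivAt J (D t) t := hasDerivAt_pi.2 fun i => hasDerivAt_pi.2 fun j => hJ i j t
    refine ((hJt.mul hJt).add_const 1).congr_deriv ?_
    exact (eq_inv_smul_iff₀ two_ne_zero).2 (two_smul_mul_add_mul_eq_of_two_smul_eq (hD t))
  have hK_eq_zero := eq_zero_of_hasDerivAt_eq_apply_of_eq_zero (by fun_prop) hK
    (show J 0 * J 0 + 1 = 0 by rw [h0, neg_add_cancel])
  intro t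
  exact eq_neg_of_add_eq_zero_left (congrFun hK_eq_zero t)
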